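/- arXiv:1710.08775 — 2 statements merged into one kernel-verified Lean document; each statement's English description precedes it below -/
import Mathlib

section
/- The moralization of a HEDG equals the marginalization of the moralization of its augmented graph: for a HEDG G=(V,E,H), G^moral = ((G^aug)^moral)^{marg}, where the marginalization is with respect to the set of auxiliary nodes {e_F | F maximal in H}. -/
namespace HedgPaper

variable {V : Type*}

/-- directed reachability: existence of a directed path (possibly trivial). -/
def Reach (E : V → V → Prop) : V → V → Prop := Relation.ReflTransGen E

/-- `v` and `w` lie in the same strongly connected component. -/
def InSC (E : V → V → Prop) (v w : V) : Prop := Reach E v w ∧ Reach E w v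

/-- the set of ancestors of a set `Z`. -/
def AncSet (E : V → V → Prop) (Z : Set V) : Set V := {v | ∃ z ∈ Z, Reach E v z}

/-- `H` is a simplicial complex over `V`. -/
def IsSimplicial (H : Set (Set V)) : Prop :=
  (∀ v : V, ({v} : Set V) ∈ H) ∧ ∀ F ∈ H, ∀ F' : Set V, F' ⊆ F → F' ∈ H

/-- direction of an edge on a path: forward, backward, or bidirected. -/
inductive EDir : Type
  | fwd | bwd | bi

/-- one step of a walk in a HEDG. -/
structure Step (V : Type*) where
  src : V
  dir : EDir
  dst : V

/-- the step is an actual (directed or bidirected) edge of the HEDG `(V,E,H)`. -/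
def Step.Valid (E : V → V → Prop) (H : Set (Set V)) (s : Step V) : Prop :=
  match s.dir with
  | .fwd => E s.src s.dst
  | .bwd => E s.dst s.src
  | .bi  => s.src ≠ s.dst ∧ ({s.src, s.dst} : Set V) ∈ H

/-- the step has an arrowhead at its destination. -/
def Step.HeadAtDst (s : Step V) : Prop := s.dir = EDir.fwd ∨ s.dir = EDir.bi

/-- the step has an arrowhead at its source. -/
def Step.HeadAtSrc (s : Step V) : Prop := s.dir = EDir.bwd ∨ s.dir = EDir.bi

/-- `l` is a walk (path, possibly with repeated nodes) from `x` to `y` in `(V,E,H)`. -/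
def IsWalk (E : V → V → Prop) (H : Set (Set V)) : List (Step V) → V → V → Prop
  | [], x, y => x = y
  | s :: l, x, y => s.src = x ∧ s.Valid E H ∧ IsWalk E H l s.dst y

/-- all interior nodes of the walk are `Z`-open in the d-separation sense:
colliders are ancestors of `Z`, non-colliders are not in `Z`. -/
def DInteriorOpen (E : V → V → Prop) (Z : Set V) : List (Step V) → Prop
  | [] => True
  | [_] => True
  | s :: t :: l =>
      ((s.HeadAtDst ∧ t.HeadAtSrc) → s.dst ∈ AncSet E Z) ∧
      (¬ (s.HeadAtDst ∧ t.HeadAtSrc) → s.dst ∉ Z) ∧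
      DInteriorOpen E Z (t :: l)

/-- `X` is d-separated from `Y` given `Z` in the HEDG `(V,E,H)`:
every walk from `X` to `Y` is `Z`-blocked. -/
def DSep (E : V → V → Prop) (H : Set (Set V)) (X Y Z : Set V) : Prop :=
  ∀ x ∈ X, ∀ y ∈ Y, ∀ l : List (Step V),
    IsWalk E H l x y → ¬ (x ∉ Z ∧ y ∉ Z ∧ DInteriorOpen E Z l)

/-- all interior nodes of the walk are `Z`-σ-open: colliders are ancestors of `Z`,
and a non-collider in `Z` must not point (via a directed edge of the path) to a
node outside of its strongly connected component. -/
def SigmaInteriorOpen (E : V → V → Prop) (Z : Set V) : List (Step V) → Prop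
  | [] => True
  | [_] => True
  | s :: t :: l =>
      ((s.HeadAtDst ∧ t.HeadAtSrc) → s.dst ∈ AncSet E Z) ∧
      (¬ (s.HeadAtDst ∧ t.HeadAtSrc) →
        ¬ (s.dst ∈ Z ∧ ((¬ s.HeadAtDst ∧ ¬ InSC E s.dst s.src) ∨
                        (¬ t.HeadAtSrc ∧ ¬ InSC E s.dst t.dst)))) ∧
      SigmaInteriorOpen E Z (t :: l)

/-- `X` is σ-separated from `Y` given `Z` in the HEDG `(V,E,H)`. -/
def SigmaSep (E : V → V → Prop) (H : Set (Set V)) (X Y Z : Set V) : Prop :=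
  ∀ x ∈ X, ∀ y ∈ Y, ∀ l : List (Step V),
    IsWalk E H l x y → ¬ (x ∉ Z ∧ y ∉ Z ∧ SigmaInteriorOpen E Z l)

/-- directed edges of the marginalization of `(V,E,H)` w.r.t. (i.e. after removing) `U`:
`a → b` iff there is a directed path `a → u₁ → ⋯ → u_r → b` in `G` with all `uᵢ ∈ U`. -/
def MargE (E : V → V → Prop) (U : Set V) : V → V → Prop :=
  fun a b => a ∉ U ∧ b ∉ U ∧
    ∃ c, Relation.ReflTransGen (fun x y => E x y ∧ y ∈ U) a c ∧ E c b

/-- hyperedges of the marginalization of `(V,E,H)` w.r.t. `U`. -/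
def MargH (E : V → V → Prop) (H : Set (Set V)) (U : Set V) : Set (Set V) :=
  {F' | (∀ v ∈ F', v ∉ U) ∧ ∃ F ∈ H, F ⊆ F' ∪ U ∧
    ∀ v ∈ F', (v ∈ F ∧ v ∉ U) ∨
      ∃ u ∈ F ∩ U, ∃ c, Relation.ReflTransGen (fun x y => E x y ∧ y ∈ U) u c ∧ E c v}

/-- bidirected-edge relation induced by the hyperedges. -/
def BiRel (H : Set (Set V)) : V → V → Prop :=
  fun x y => x ≠ y ∧ ({x, y} : Set V) ∈ H

/-- (generalized) moralization of a HEDG: `v — w` iff there are `a`, `b` with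
`v ∈ {a} ∪ Pa(a)`, `w ∈ {b} ∪ Pa(b)` and a bidirected chain `a ↔ ⋯ ↔ b`. -/
def MoralE (E : V → V → Prop) (H : Set (Set V)) : V → V → Prop :=
  fun v w => v ≠ w ∧ ∃ a b, (v = a ∨ E v a) ∧ (w = b ∨ E w b) ∧
    Relation.ReflTransGen (BiRel H) a b

/-- moralization of a directed graph: undirected versions of the directed edges plus
edges between distinct parents of a common child. -/
def MoralDirE (E : V → V → Prop) : V → V → Prop :=
  fun v w => v ≠ w ∧ (E v w ∨ E w v ∨ ∃ c, E v c ∧ E w c)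

/-- marginalization of an undirected graph `A` w.r.t. `W`: `a — b` iff there is a path
from `a` to `b` with all intermediate nodes in `W`. -/
def MargUnd (A : V → V → Prop) (W : Set V) : V → V → Prop :=
  fun a b => a ∉ W ∧ b ∉ W ∧ a ≠ b ∧
    ∃ c, Relation.ReflTransGen (fun x y => A x y ∧ y ∈ W) a c ∧ A c b

/-- separation in an undirected graph: every path from `X` to `Y` contains a node of
`Z` (including the endnodes). -/
def USep (A : V → V → Prop) (X Y Z : Set V) : Prop :=
  ∀ x ∈ X, ∀ y ∈ Y,
    ¬ (x ∉ Z ∧ Relation.ReflTransGen (fun a b => A a b ∧ b ∉ Z) x y)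

/-- edges of the induced sub-HEDG on `A`. -/
def InducedE (E : V → V → Prop) (A : Set V) : V → V → Prop :=
  fun a b => a ∈ A ∧ b ∈ A ∧ E a b

/-- hyperedges of the induced sub-HEDG on `A`. -/
def InducedH (H : Set (Set V)) (A : Set V) : Set (Set V) := {F | F ∈ H ∧ F ⊆ A}

/-- `F` is an inclusion-maximal hyperedge of `H`. -/
def MaximalHyperedge (H : Set (Set V)) (F : Set V) : Prop :=
  F ∈ H ∧ ∀ F' ∈ H, F ⊆ F' → F' = F

/-- edges of the augmented directed graph of a HEDG: the original directed edges plus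
`e_F → v` for every maximal hyperedge `F` and every `v ∈ F`. -/
def AugE (E : V → V → Prop) (H : Set (Set V)) :
    V ⊕ {F : Set V // MaximalHyperedge H F} →
    V ⊕ {F : Set V // MaximalHyperedge H F} → Prop
  | .inl v, .inl w => E v w
  | .inr F, .inl v => v ∈ F.1
  | _, _ => False

/-- the trivial simplicial complex (only subsingleton hyperedges), making a directed
graph a HEDG without bidirected edges. -/
def TrivialH (W : Type*) : Set (Set W) := {F | Set.Subsingleton F}

/-- directed edges of the acyclification of a HEDG. -/
def AcyE (E : V → V → Prop) : V → V → Prop :=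
  fun v w => ¬ InSC E v w ∧ ∃ w', InSC E w w' ∧ E v w'

/-- hyperedges of the acyclification of a HEDG. -/
def AcyH (E : V → V → Prop) (H : Set (Set V)) : Set (Set V) :=
  {F' | ∃ F ∈ H, ∀ x ∈ F', ∃ v ∈ F, InSC E v x}

/-! In `G^aug` the auxiliary nodes `e_M`, `e_N` are adjacent in the moral graph iff the maximal
hyperedges `M`, `N` meet, and `v` is adjacent to `e_M` iff `v` lies in `M` or is a parent of a node
of `M`. Since `H` is simplicial, every bidirected edge lies in a maximal hyperedge and any two nodes
of a hyperedge are joined by a bidirected edge, so a bidirected chain `a ↔ ⋯ ↔ b` is the same as a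
chain of pairwise meeting maximal hyperedges from one containing `a` to one containing `b`. -/

section Augmentation

open Relation

variable {E : V → V → Prop} {H : Set (Set V)}

abbrev MaxHyperedge (H : Set (Set V)) : Type _ := {F : Set V // MaximalHyperedge H F}

def Overlaps (M N : MaxHyperedge H) : Prop := (M.1 ∩ N.1).Nonempty

def ParentsOrSelf (E : V → V → Prop) (F : Set V) : Set V := {v | ∃ a ∈ F, v = a ∨ E v a}

lemma exists_maximalHyperedge_superset [Finite V] {F : Set V} (hF : F ∈ H) :
    ∃ M, MaximalHyperedge H M ∧ F ⊆ M := by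
  obtain ⟨M, ⟨hM, hFM⟩, hmax⟩ := Set.Finite.exists_maximalFor id {F' ∈ H | F ⊆ F'}
    (Set.toFinite _) ⟨F, hF, subset_rfl⟩
  exact ⟨M, ⟨hM, fun F' hF' hMF' => le_antisymm (hmax ⟨hF', hFM.trans hMF'⟩ hMF') hMF'⟩, hFM⟩

lemma IsSimplicial.reflTransGen_biRel_of_mem (hH : IsSimplicial H) {F : Set V} (hF : F ∈ H)
    {x y : V} (hx : x ∈ F) (hy : y ∈ F) : ReflTransGen (BiRel H) x y := by
  rcases eq_or_ne x y with rfl | hxy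
  · exact .refl
  · exact .single ⟨hxy, hH.2 F hF _ (Set.pair_subset hx hy)⟩

lemma IsSimplicial.reflTransGen_biRel_of_overlaps (hH : IsSimplicial H) {M N : MaxHyperedge H}
    (hMN : ReflTransGen Overlaps M N) {a b : V} (ha : a ∈ M.1) (hb : b ∈ N.1) :
    ReflTransGen (BiRel H) a b := by
  induction hMN generalizing b with
  | refl => exact hH.reflTransGen_biRel_of_mem M.2.1 ha hb
  | @tail N' N _ hN'N ih =>
    obtain ⟨c, hcN', hcN⟩ := hN'N
    exact (ih hcN').trans (hH.reflTransGen_biRel_of_mem N.2.1 hcN hb)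

lemma exists_reflTransGen_overlaps [Finite V] {a b : V} (hab : ReflTransGen (BiRel H) a b)
    {M : MaxHyperedge H} (ha : a ∈ M.1) :
    ∃ N : MaxHyperedge H, b ∈ N.1 ∧ ReflTransGen Overlaps M N := by
  induction hab with
  | refl => exact ⟨M, ha, .refl⟩
  | tail _ hbc ih =>
    obtain ⟨N, hbN, hMN⟩ := ih
    obtain ⟨N', hN', hsub⟩ := exists_maximalHyperedge_superset hbc.2
    exact ⟨⟨N', hN'⟩, hsub (by simp), hMN.tail ⟨_, hbN, hsub (by simp)⟩⟩

lemma moralE_of_moralDirE {v w : V} (h : MoralDirE E v w) : MoralE E H v w := by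
  obtain ⟨hvw, hvw' | hwv | ⟨c, hvc, hwc⟩⟩ := h
  · exact ⟨hvw, w, w, .inr hvw', .inl rfl, .refl⟩
  · exact ⟨hvw, v, v, .inl rfl, .inr hwv, .refl⟩
  · exact ⟨hvw, c, c, .inr hvc, .inr hwc, .refl⟩

theorem moralE_iff_exists_reflTransGen_overlaps [Finite V] (hH : IsSimplicial H) {v w : V} :
    MoralE E H v w ↔ v ≠ w ∧ ∃ M N : MaxHyperedge H,
      v ∈ ParentsOrSelf E M.1 ∧ ReflTransGen Overlaps M N ∧ w ∈ ParentsOrSelf E N.1 := by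
  constructor
  · rintro ⟨hvw, a, b, hva, hwb, hab⟩
    obtain ⟨M, hM, haM⟩ := exists_maximalHyperedge_superset (hH.1 a)
    obtain ⟨N, hbN, hMN⟩ := exists_reflTransGen_overlaps hab (M := ⟨M, hM⟩) (haM rfl)
    exact ⟨hvw, ⟨M, hM⟩, N, ⟨a, haM rfl, hva⟩, hMN, b, hbN, hwb⟩
  · rintro ⟨hvw, M, N, ⟨a, haM, hva⟩, hMN, b, hbN, hwb⟩
    exact ⟨hvw, a, b, hva, hwb, hH.reflTransGen_biRel_of_overlaps hMN haM hbN⟩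

lemma moralDirE_comm {v w : V} : MoralDirE E v w ↔ MoralDirE E w v := by
  unfold MoralDirE
  grind

@[simp] lemma moralDirE_augE_inl_inl {v w : V} :
    MoralDirE (AugE E H) (.inl v) (.inl w) ↔ MoralDirE E v w := by
  simp [MoralDirE, AugE, Sum.exists]

@[simp] lemma moralDirE_augE_inl_inr {v : V} {M : MaxHyperedge H} :
    MoralDirE (AugE E H) (.inl v) (.inr M) ↔ v ∈ ParentsOrSelf E M.1 := by
  simp only [MoralDirE, AugE, Sum.exists, ParentsOrSelf]
  grind

@[simp] lemma moralDirE_augE_inr_inr {M N : MaxHyperedge H} :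
    MoralDirE (AugE E H) (.inr M) (.inr N) ↔ M ≠ N ∧ Overlaps M N := by
  simp [MoralDirE, AugE, Sum.exists, Overlaps, Set.Nonempty]

lemma reflTransGen_auxiliary_iff {M : MaxHyperedge H} {x : V ⊕ MaxHyperedge H} :
    ReflTransGen (fun x y => MoralDirE (AugE E H) x y ∧ y ∈ Set.range Sum.inr) (.inr M) x ↔
      ∃ N, x = .inr N ∧ ReflTransGen Overlaps M N := by
  constructor
  · intro h
    induction h with
    | refl => exact ⟨M, rfl, .refl⟩
    | tail _ hyz ih =>
      obtain ⟨hyz, N', rfl⟩ := hyz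
      obtain ⟨N, rfl, hMN⟩ := ih
      exact ⟨N', rfl, hMN.tail (moralDirE_augE_inr_inr.1 hyz).2⟩
  · rintro ⟨N, rfl, hMN⟩
    induction hMN with
    | refl => exact .refl
    | @tail N N' _ hNN' ih =>
      rcases eq_or_ne N N' with rfl | hne
      · exact ih
      · exact ih.tail ⟨moralDirE_augE_inr_inr.2 ⟨hne, hNN'⟩, N', rfl⟩

theorem margUnd_moralDirE_augE_iff {v w : V} :
    MargUnd (MoralDirE (AugE E H)) (Set.range Sum.inr) (.inl v) (.inl w) ↔
      v ≠ w ∧ (MoralDirE E v w ∨ ∃ M N : MaxHyperedge H,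
        v ∈ ParentsOrSelf E M.1 ∧ ReflTransGen Overlaps M N ∧ w ∈ ParentsOrSelf E N.1) := by
  simp only [MargUnd, Set.mem_range, reduceCtorEq, exists_false, not_false_eq_true, ne_eq,
    Sum.inl.injEq, true_and]
  refine and_congr_right fun _ => ⟨?_, ?_⟩
  · rintro ⟨c, hvc, hcw⟩
    rcases hvc.cases_head with rfl | ⟨_, ⟨hvM, M, rfl⟩, hMc⟩
    · exact .inl (moralDirE_augE_inl_inl.1 hcw)
    · obtain ⟨N, rfl, hMN⟩ := reflTransGen_auxiliary_iff.1 hMc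
      exact .inr ⟨M, N, moralDirE_augE_inl_inr.1 hvM, hMN,
        moralDirE_augE_inl_inr.1 (moralDirE_comm.1 hcw)⟩
  · rintro (hvw | ⟨M, N, hvM, hMN, hwN⟩)
    · exact ⟨_, .refl, moralDirE_augE_inl_inl.2 hvw⟩
    · exact ⟨.inr N,
        .head ⟨moralDirE_augE_inl_inr.2 hvM, M, rfl⟩ (reflTransGen_auxiliary_iff.2 ⟨N, rfl, hMN⟩),
        moralDirE_comm.1 (moralDirE_augE_inl_inr.2 hwN)⟩

end Augmentation

/-- The moralization of a HEDG equals the marginalization (w.r.t. the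
auxiliary hyperedge nodes) of the moralization of its augmented directed graph:
`G^moral = ((G^aug)^moral)^marg`. -/
theorem moralization_eq_marg_moral_augmented {V : Type*} [Fintype V]
    (E : V → V → Prop) (H : Set (Set V)) (hH : IsSimplicial H) (v w : V) :
    MoralE E H v w ↔
      MargUnd (MoralDirE (AugE E H)) (Set.range Sum.inr) (Sum.inl v) (Sum.inl w) := by
  rw [margUnd_moralDirE_augE_iff]
  constructor
  · intro h
    exact ⟨h.1, .inr ((moralE_iff_exists_reflTransGen_overlaps hH).1 h).2⟩
  · rintro ⟨hvw, hdir | hchain⟩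
    · exact moralE_of_moralDirE hdir
    · exact (moralE_iff_exists_reflTransGen_overlaps hH).2 ⟨hvw, hchain⟩

end HedgPaper
end

section
/- If X is separated from Y given Z in the moralization G^moral of a HEDG G, then X is d-separated from Y given Z in G. -/
namespace HedgPaper

variable {V : Type*}

/-!
Along a d-open walk every non-collider, endpoints included, lies outside `Z`. Between two
consecutive non-colliders `v` and `w` the walk is `v → c₁ ↔ ⋯ ↔ cₖ ← w`, where either outer
edge may also be bidirected (`v = c₁`, `w = cₖ`); so `v` and `w` are nodes or parents of nodes
of one district, i.e. adjacent (or equal) in `G^moral`. The non-colliders of the walk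
therefore form a path in `G^moral` avoiding `Z`.
-/

/-- The district (bidirected component) of `x` together with the parents of its nodes. -/
def PaDist (E : V → V → Prop) (H : Set (Set V)) (x : V) : Set V :=
  {v | ∃ a, (v = a ∨ E v a) ∧ Relation.ReflTransGen (BiRel H) a x}

section

variable {E : V → V → Prop} {H : Set (Set V)} {Z : Set V}

theorem self_mem_paDist (x : V) : x ∈ PaDist E H x :=
  ⟨x, Or.inl rfl, .refl⟩

theorem moralE_of_mem_paDist {v w b : V} (hv : v ∈ PaDist E H b) (hw : w = b ∨ E w b)
    (hvw : v ≠ w) : MoralE E H v w :=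
  let ⟨a, hva, hab⟩ := hv
  ⟨hvw, a, b, hva, hw, hab⟩

theorem reflTransGen_moralE_of_mem_paDist {v w b : V} (hv : v ∈ PaDist E H b)
    (hw : w = b ∨ E w b) (hwZ : w ∉ Z) :
    Relation.ReflTransGen (fun p q => MoralE E H p q ∧ q ∉ Z) v w := by
  by_cases hvw : v = w
  · exact hvw ▸ .refl
  · exact .single ⟨moralE_of_mem_paDist hv hw hvw, hwZ⟩

/-- Crossing one edge `s` of a walk while tracking the last non-collider `v`: the edge is
entered at `s.src` with an arrowhead unless `v = s.src`. -/
theorem Step.exists_mem_paDist {s : Step V} {v : V} (hs : s.Valid E H)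
    (hv : v ∈ PaDist E H s.src) (hhead : v = s.src ∨ s.HeadAtSrc) :
    ∃ b, v ∈ PaDist E H b ∧ (s.dst = b ∨ E s.dst b) ∧ (s.HeadAtDst → b = s.dst) := by
  obtain ⟨x, d, m⟩ := s
  cases d with
  | fwd =>
    have hvx : v = x := hhead.resolve_right (by simp [Step.HeadAtSrc])
    exact ⟨m, ⟨m, Or.inr (hvx ▸ hs), .refl⟩, Or.inl rfl, fun _ => rfl⟩
  | bwd =>
    exact ⟨x, hv, Or.inr hs, fun h => by simp [Step.HeadAtDst] at h⟩
  | bi =>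
    obtain ⟨a, hva, hax⟩ := hv
    exact ⟨m, ⟨a, hva, hax.tail hs⟩, Or.inl rfl, fun _ => rfl⟩

theorem DInteriorOpen.tail {s : Step V} {l : List (Step V)}
    (h : DInteriorOpen E Z (s :: l)) : DInteriorOpen E Z l := by
  cases l with
  | nil => trivial
  | cons t l => exact h.2.2

theorem DInteriorOpen.dst_not_mem {s : Step V} {l : List (Step V)} {x y : V}
    (hw : IsWalk E H (s :: l) x y) (hopen : DInteriorOpen E Z (s :: l)) (hy : y ∉ Z)
    (hcol : ¬ (s.HeadAtDst ∧ ∀ t ∈ l.head?, t.HeadAtSrc)) : s.dst ∉ Z := by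
  cases l with
  | nil =>
    have hdst : s.dst = y := hw.2.2
    exact hdst ▸ hy
  | cons t l => exact hopen.2.1 (by simpa using hcol)

/-- `v` is the last non-collider visited before reaching `x`; unless `v = x`, the walk is
inside a collider segment, so its next edge must carry an arrowhead at `x`. -/
theorem reflTransGen_moralE_of_isWalk {l : List (Step V)} {x y v : V}
    (hw : IsWalk E H l x y) (hopen : DInteriorOpen E Z l) (hy : y ∉ Z)
    (hv : v ∈ PaDist E H x) (hhead : v = x ∨ ∀ s ∈ l.head?, s.HeadAtSrc) :
    Relation.ReflTransGen (fun p q => MoralE E H p q ∧ q ∉ Z) v y := by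
  induction l generalizing x v with
  | nil =>
    have hxy : x = y := hw
    exact reflTransGen_moralE_of_mem_paDist (hxy ▸ hv) (Or.inl rfl) hy
  | cons s l ih =>
    obtain ⟨rfl, hs, hl⟩ := hw
    obtain ⟨b, hvb, hdst, hb⟩ :=
      s.exists_mem_paDist hs hv (hhead.imp_right fun h => h s rfl)
    by_cases hcol : s.HeadAtDst ∧ ∀ t ∈ l.head?, t.HeadAtSrc
    · exact ih hl hopen.tail (hb hcol.1 ▸ hvb) (Or.inr hcol.2)
    · have hdstZ := hopen.dst_not_mem ⟨rfl, hs, hl⟩ hy hcol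
      exact (reflTransGen_moralE_of_mem_paDist hvb hdst hdstZ).trans
        (ih hl hopen.tail (self_mem_paDist _) (Or.inl rfl))

end

theorem sep_moral_implies_dSep_general {V : Type*}
    (E : V → V → Prop) (H : Set (Set V)) (X Y Z : Set V) :
    USep (MoralE E H) X Y Z → DSep E H X Y Z := by
  intro hsep x hx y hy l hw ⟨hxZ, hyZ, hopen⟩
  exact hsep x hx y hy
    ⟨hxZ, reflTransGen_moralE_of_isWalk hw hopen hyZ (self_mem_paDist x) (Or.inl rfl)⟩

/-- If `X` is separated from `Y` given `Z` in the (generalized)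
moralization `G^moral` of a HEDG `G`, then `X` is d-separated from `Y` given `Z` in `G`. -/
theorem sep_moral_implies_dSep {V : Type*} [Fintype V]
    (E : V → V → Prop) (H : Set (Set V)) (hH : IsSimplicial H) (X Y Z : Set V) :
    USep (MoralE E H) X Y Z → DSep E H X Y Z :=
  sep_moral_implies_dSep_general E H X Y Z

end HedgPaper
end
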